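/- arXiv:2209.15631 — 2 statements merged into one kernel-verified Lean document; each statement's English description precedes it below -/
import Mathlib

section
/- There is no (t_1,t_2,t_3,t_4) ∈ ℝ^4 satisfying simultaneously the five equations: (t_1/40)·√(1309/10) = 0, −400 − 42·t_2 + 714·t_3 + 17·t_4 = 0, −1166400 − 32724·t_2 + 3190388·t_3 + 12069·t_4 = 0, −25600 − 712·t_2 + 65593·t_3 + 268·t_4 = 0, and −692500·t_2 + 62040244·t_3 + 625·(−40000 + 421·t_4) = 0. In particular, already the last four (linear) equations admit no common solution (t_2,t_3,t_4) ∈ ℝ³. -/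
/-- There is no `(t_1,t_2,t_3,t_4) ∈ ℝ⁴` satisfying the five equations obtained by
evaluating the determinant `f₁₄` at the five chosen points; in particular, already the
last four (linear) equations admit no common solution `(t_2,t_3,t_4) ∈ ℝ³`. -/
theorem no_common_solution_f14 :
    (¬ ∃ t₁ t₂ t₃ t₄ : ℝ,
        (t₁ / 40) * Real.sqrt (1309 / 10) = 0 ∧
        -400 - 42 * t₂ + 714 * t₃ + 17 * t₄ = 0 ∧
        -1166400 - 32724 * t₂ + 3190388 * t₃ + 12069 * t₄ = 0 ∧
        -25600 - 712 * t₂ + 65593 * t₃ + 268 * t₄ = 0 ∧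
        -692500 * t₂ + 62040244 * t₃ + 625 * (-40000 + 421 * t₄) = 0) ∧
    (¬ ∃ t₂ t₃ t₄ : ℝ,
        -400 - 42 * t₂ + 714 * t₃ + 17 * t₄ = 0 ∧
        -1166400 - 32724 * t₂ + 3190388 * t₃ + 12069 * t₄ = 0 ∧
        -25600 - 712 * t₂ + 65593 * t₃ + 268 * t₄ = 0 ∧
        -692500 * t₂ + 62040244 * t₃ + 625 * (-40000 + 421 * t₄) = 0) := by
  constructor
  · rintro ⟨t₁, t₂, t₃, t₄, -, h2, h3, h4, h5⟩
    linarith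
  · rintro ⟨t₂, t₃, t₄, h2, h3, h4, h5⟩
    linarith
end

section
/- Define jφ2 : ℝ⁴ → ℝ by jφ2(x,y,u,v) = (2+x²+y²−u²−v²)/2, and for t = (t_1,t_2,t_3,t_4) ∈ ℝ⁴ define hφ2_t : ℝ⁴ → ℝ by hφ2_t(x,y,u,v) = (1−2t_1)(u²+v²)/2 + (t_1/50)(u·x − v·y)·√(2−x²−y²+2u²+2v²)·√(8−x²−y²)·√(6−u²−v²)·√(6+x²+y²−2u²−2v²) + (t_2/50)(2−x²−y²+2u²+2v²)²·(4−x²−y²+u²+v²)² + (t_3/50)(2−x²−y²+2u²+2v²)²·(6−u²−v²)² + (t_4/100)(4−x²−y²+u²+v²)²·(6−u²−v²)². Then: (i) jφ2(0,0,0,0) = 1; (ii) the Fréchet derivative of jφ2 at a point p = (x,y,u,v) is the linear map (a,b,c,d) ↦ x·a + y·b − u·c − v·d, and it vanishes if and only if p = (0,0,0,0); (iii) for every t ∈ ℝ⁴, the Fréchet derivative of hφ2_t at (0,0,0,0) is zero. Hence the origin of the chart φ_2 is, for every t ∈ ℝ⁴, a singular point of rank zero of the system (J, H_t) with J-value 1.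 -/
/-!
`jφ2` is a constant plus a diagonal quadratic form, so its differential at `p` is the
associated linear form, which vanishes only at `p = 0`. Every term of `hφ2 t` depends on `p`
only through products of two coordinates, so `hφ2 t` is even; the differential of an even
function at the origin equals its own negative and hence vanishes.
-/

open Real

/-- `J ∘ φ_2` in the chart `φ_2`: `jφ2(x,y,u,v) = (2+x²+y²−u²−v²)/2`. -/
noncomputable def jφ2 (p : Fin 4 → ℝ) : ℝ :=
  (2 + (p 0) ^ 2 + (p 1) ^ 2 - (p 2) ^ 2 - (p 3) ^ 2) / 2

/-- `H_t ∘ φ_2` in the chart `φ_2`. -/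
noncomputable def hφ2 (t : Fin 4 → ℝ) (p : Fin 4 → ℝ) : ℝ :=
  (1 - 2 * t 0) * ((p 2) ^ 2 + (p 3) ^ 2) / 2 +
  (t 0 / 50) * (p 2 * p 0 - p 3 * p 1) *
    Real.sqrt (2 - (p 0) ^ 2 - (p 1) ^ 2 + 2 * (p 2) ^ 2 + 2 * (p 3) ^ 2) *
    Real.sqrt (8 - (p 0) ^ 2 - (p 1) ^ 2) *
    Real.sqrt (6 - (p 2) ^ 2 - (p 3) ^ 2) *
    Real.sqrt (6 + (p 0) ^ 2 + (p 1) ^ 2 - 2 * (p 2) ^ 2 - 2 * (p 3) ^ 2) +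
  (t 1 / 50) * (2 - (p 0) ^ 2 - (p 1) ^ 2 + 2 * (p 2) ^ 2 + 2 * (p 3) ^ 2) ^ 2 *
    (4 - (p 0) ^ 2 - (p 1) ^ 2 + (p 2) ^ 2 + (p 3) ^ 2) ^ 2 +
  (t 2 / 50) * (2 - (p 0) ^ 2 - (p 1) ^ 2 + 2 * (p 2) ^ 2 + 2 * (p 3) ^ 2) ^ 2 *
    (6 - (p 2) ^ 2 - (p 3) ^ 2) ^ 2 +
  (t 3 / 100) * (4 - (p 0) ^ 2 - (p 1) ^ 2 + (p 2) ^ 2 + (p 3) ^ 2) ^ 2 *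
    (6 - (p 2) ^ 2 - (p 3) ^ 2) ^ 2

theorem fderiv_zero_eq_zero_of_even {𝕜 E F : Type*} [NontriviallyNormedField 𝕜] [CharZero 𝕜]
    [NormedAddCommGroup E] [NormedSpace 𝕜 E] [NormedAddCommGroup F] [NormedSpace 𝕜 F]
    {f : E → F} (hf : ∀ x, f (-x) = f x) : fderiv 𝕜 f 0 = 0 := by
  have hcomp := (ContinuousLinearEquiv.neg 𝕜 : E ≃L[𝕜] E).comp_right_fderiv (f := f) (x := 0)
  have hf' : f ∘ (ContinuousLinearEquiv.neg 𝕜 : E ≃L[𝕜] E) = f := funext hf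
  have hneg : (ContinuousLinearEquiv.neg 𝕜 : E ≃L[𝕜] E) = -ContinuousLinearMap.id 𝕜 E := by
    ext; simp
  rw [hf', hneg, ContinuousLinearEquiv.neg_apply, neg_zero, ContinuousLinearMap.comp_neg,
    ContinuousLinearMap.comp_id] at hcomp
  have htwo : (2 : 𝕜) • fderiv 𝕜 f 0 = 0 := by
    rw [two_smul]
    nth_rewrite 2 [hcomp]
    exact add_neg_cancel _
  exact (smul_eq_zero.mp htwo).resolve_left two_ne_zero

theorem hasFDerivAt_jφ2 (p : Fin 4 → ℝ) :
    HasFDerivAt jφ2 (p 0 • .proj 0 + p 1 • .proj 1 - p 2 • .proj 2 - p 3 • .proj 3 :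
      (Fin 4 → ℝ) →L[ℝ] ℝ) p := by
  have hsq (i : Fin 4) : HasFDerivAt (fun q : Fin 4 → ℝ ↦ q i ^ 2)
      ((2 * p i) • .proj i : (Fin 4 → ℝ) →L[ℝ] ℝ) p := by
    simpa using (hasFDerivAt_apply (𝕜 := ℝ) i p).pow 2
  have h := (((((hsq 0).const_add 2).add (hsq 1)).sub (hsq 2)).sub (hsq 3)).mul_const (2⁻¹ : ℝ)
  have hjφ2 : jφ2 = fun q ↦ (2 + q 0 ^ 2 + q 1 ^ 2 - q 2 ^ 2 - q 3 ^ 2) * 2⁻¹ :=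
    funext fun _ ↦ div_eq_mul_inv _ _
  rw [hjφ2]
  refine h.congr_fderiv ?_
  ext v
  simp only [smul_apply, sub_apply, add_apply, ContinuousLinearMap.proj_apply, smul_eq_mul]
  ring

theorem fderiv_jφ2_apply (p v : Fin 4 → ℝ) :
    fderiv ℝ jφ2 p v = p 0 * v 0 + p 1 * v 1 - p 2 * v 2 - p 3 * v 3 := by
  simp [(hasFDerivAt_jφ2 p).fderiv]

theorem fderiv_jφ2_eq_zero_iff (p : Fin 4 → ℝ) : fderiv ℝ jφ2 p = 0 ↔ p = 0 := by
  refine ⟨fun h ↦ ?_, fun h ↦ ?_⟩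
  · -- evaluating at `(x, y, -u, -v)` gives `x² + y² + u² + v² = 0`
    have hnorm := fderiv_jφ2_apply p ![p 0, p 1, -p 2, -p 3]
    simp only [h, zero_apply, Matrix.cons_val, mul_neg, sub_neg_eq_add] at hnorm
    funext i
    rw [Pi.zero_apply]
    fin_cases i <;> dsimp <;>
      nlinarith [sq_nonneg (p 0), sq_nonneg (p 1), sq_nonneg (p 2), sq_nonneg (p 3)]
  · ext v
    simp [fderiv_jφ2_apply, h]

theorem hφ2_neg (t p : Fin 4 → ℝ) : hφ2 t (-p) = hφ2 t p := by
  simp only [hφ2, Pi.neg_apply, neg_sq, neg_mul_neg]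

/-- (i) `jφ2(0) = 1`; (ii) the Fréchet derivative of `jφ2` at `p = (x,y,u,v)` is the
linear map `(a,b,c,d) ↦ xa + yb − uc − vd`, and it vanishes iff `p = 0`;
(iii) for every `t`, the Fréchet derivative of `hφ2 t` at the origin is zero.
Hence the origin of the chart `φ_2` is, for every `t`, a rank-zero singular point of
`(J, H_t)` with `J`-value `1`. -/
theorem origin_of_chart_two_is_rank_zero :
    jφ2 0 = 1 ∧
    (∀ p v : Fin 4 → ℝ,
      fderiv ℝ jφ2 p v = p 0 * v 0 + p 1 * v 1 - p 2 * v 2 - p 3 * v 3) ∧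
    (∀ p : Fin 4 → ℝ, fderiv ℝ jφ2 p = 0 ↔ p = 0) ∧
    (∀ t : Fin 4 → ℝ, fderiv ℝ (hφ2 t) 0 = 0) :=
  ⟨by norm_num [jφ2], fderiv_jφ2_apply, fderiv_jφ2_eq_zero_iff,
    fun t ↦ fderiv_zero_eq_zero_of_even (hφ2_neg t)⟩
end
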